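/- In the toric almost-Kähler setting, the modified Chern scalar curvature multiplied by the weight factors as e^{-2f_ξ} s^c_ξ = -(1/2) Σ_{i,j} ∂²(e^{-2f_ξ} H_{ij})/∂z_i∂z_j + e^{-2f_ξ}(2f_ξ - n), where f_ξ = Σ_i a_i z_i + a_{n+1} is affine. -/

import Mathlib

/-- Partial derivative `∂F/∂z_i` of a function on `ℝⁿ`. -/
noncomputable def pd {n : ℕ} (i : Fin n) (F : (Fin n → ℝ) → ℝ) : (Fin n → ℝ) → ℝ :=
  fun z => fderiv ℝ F z (Pi.single i 1)

lemma pd_contDiff {n : ℕ} (j : Fin n) {F : (Fin n → ℝ) → ℝ} (hF : ContDiff ℝ (⊤ : ℕ∞) F) :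
    ContDiff ℝ (⊤ : ℕ∞) (pd j F) := by
  have h := hF.fderiv_right (m := (⊤ : ℕ∞)) (by simp)
  exact h.clm_apply contDiff_const

lemma pd_exp_mul {n : ℕ} (a : Fin n → ℝ) (aend : ℝ) (fξ : (Fin n → ℝ) → ℝ)
    (hfξ : ∀ z, fξ z = (∑ i, a i * z i) + aend)
    (G : (Fin n → ℝ) → ℝ) (hG : Differentiable ℝ G) (j : Fin n) (z : Fin n → ℝ) :
    pd j (fun w => Real.exp (-2 * fξ w) * G w) z
      = Real.exp (-2 * fξ z) * (pd j G z - 2 * a j * G z) := by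
  set L : (Fin n → ℝ) →L[ℝ] ℝ := ∑ i, a i • ContinuousLinearMap.proj i with hL
  have hLapp : ∀ w, L w = ∑ i, a i * w i := by
    intro w; simp [hL, ContinuousLinearMap.sum_apply]
  have hf : HasFDerivAt fξ L z := by
    have he : fξ = fun w => L w + aend := by funext w; rw [hfξ, hLapp]
    rw [he]; exact L.hasFDerivAt.add_const aend
  have hE : HasFDerivAt (fun w => Real.exp (-2 * fξ w))
      (Real.exp (-2 * fξ z) • ((-2:ℝ) • L)) z := (hf.const_mul (-2)).exp
  have hprod := hE.mul (hG z).hasFDerivAt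
  have hfd := hprod.fderiv
  have hLj : L (Pi.single j 1) = a j := by
    rw [hLapp]; simp [Pi.single_apply]
  show fderiv ℝ _ z (Pi.single j 1) = _
  rw [show (fun w => Real.exp (-2 * fξ w) * G w) = (fun w => Real.exp (-2 * fξ w)) * G from rfl, hfd]
  simp only [ContinuousLinearMap.add_apply, ContinuousLinearMap.smul_apply, hLj, smul_eq_mul]
  unfold pd; ring

lemma pd_sub_const_mul {n : ℕ} {F G : (Fin n → ℝ) → ℝ}
    (hF : Differentiable ℝ F) (hG : Differentiable ℝ G) (c : ℝ) (i : Fin n) (z : Fin n → ℝ) :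
    pd i (fun w => F w - c * G w) z = pd i F z - c * pd i G z := by
  have h := ((hF z).hasFDerivAt.sub ((hG z).hasFDerivAt.const_mul c)).fderiv
  show fderiv ℝ _ z (Pi.single i 1) = _
  rw [show (fun w => F w - c * G w) = (F - fun y => c * G y) from rfl, h]
  simp only [ContinuousLinearMap.coe_sub', Pi.sub_apply, ContinuousLinearMap.smul_apply,
    smul_eq_mul]
  rfl

/-- In the toric almost-Kähler setting (on the interior of the Delzant
polytope, represented by the open set `U ⊆ ℝⁿ`), with `H = (H_{ij}(z))` smooth symmetric
positive-definite, Chern scalar curvature `s^c = -(1/2)Σ H_{ij,ij}`,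
`Δ^g f_ξ = -Σ a_i H_{ij,j}`, `|df_ξ|² = Σ a_i a_j H_{ij}` and affine potential
`f_ξ = Σ a_i z_i + a_{n+1}`, the modified Chern scalar curvature
`s^c_ξ = s^c - n - 2Δ^g f_ξ + 2f_ξ - 2|df_ξ|²` satisfies
`e^{-2f_ξ} s^c_ξ = -(1/2) Σ_{i,j} (e^{-2f_ξ} H_{ij})_{,ij} + e^{-2f_ξ}(2f_ξ - n)`. -/
theorem stmt_10 {n : ℕ} (U : Set (Fin n → ℝ)) (hU : IsOpen U)
    (H : Fin n → Fin n → (Fin n → ℝ) → ℝ)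
    (hHsmooth : ∀ i j, ContDiff ℝ (⊤ : ℕ∞) (H i j))
    (hHsymm : ∀ i j, H i j = H j i)
    (a : Fin n → ℝ) (aend : ℝ)
    (fξ : (Fin n → ℝ) → ℝ) (hfξ : ∀ z, fξ z = (∑ i, a i * z i) + aend)
    (sc Δf nrm scξ : (Fin n → ℝ) → ℝ)
    (hsc : ∀ z, sc z = -(1/2 : ℝ) * ∑ i, ∑ j, pd i (pd j (H i j)) z)
    (hΔf : ∀ z, Δf z = -∑ i, ∑ j, a i * pd j (H i j) z)
    (hnrm : ∀ z, nrm z = ∑ i, ∑ j, a i * a j * H i j z)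
    (hscξ : ∀ z, scξ z = sc z - n - 2 * Δf z + 2 * fξ z - 2 * nrm z) :
    ∀ z ∈ U, Real.exp (-2 * fξ z) * scξ z
      = -(1/2 : ℝ) * (∑ i, ∑ j,
            pd i (pd j (fun w => Real.exp (-2 * fξ w) * H i j w)) z)
        + Real.exp (-2 * fξ z) * (2 * fξ z - n) := by
  intro z _
  have hHd : ∀ i j, Differentiable ℝ (H i j) := fun i j => (hHsmooth i j).differentiable (by simp)
  have hterm : ∀ i j : Fin n,
      pd i (pd j (fun w => Real.exp (-2 * fξ w) * H i j w)) z
        = Real.exp (-2 * fξ z) * pd i (pd j (H i j)) z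
          - Real.exp (-2 * fξ z) * (2 * (a j * pd i (H i j) z))
          - Real.exp (-2 * fξ z) * (2 * (a i * pd j (H i j) z))
          + Real.exp (-2 * fξ z) * (4 * (a i * a j * H i j z)) := by
    intro i j
    have hGd : Differentiable ℝ (fun w => pd j (H i j) w - 2 * a j * H i j w) :=
      ((pd_contDiff j (hHsmooth i j)).differentiable (by simp)).sub ((hHd i j).const_mul _)
    have h1 : pd j (fun w => Real.exp (-2 * fξ w) * H i j w)
        = fun w => Real.exp (-2 * fξ w) * (pd j (H i j) w - 2 * a j * H i j w) := by
      funext w; exact pd_exp_mul a aend fξ hfξ _ (hHd i j) j w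
    have h2 := pd_exp_mul a aend fξ hfξ
      (fun w => pd j (H i j) w - 2 * a j * H i j w) hGd i z
    have h3 := pd_sub_const_mul
      ((pd_contDiff j (hHsmooth i j)).differentiable (by simp)) (hHd i j) (2 * a j) i z
    rw [h1, h2, h3]; ring
  have hT : (∑ i, ∑ j, a j * pd i (H i j) z) = ∑ i, ∑ j, a i * pd j (H i j) z := by
    rw [Finset.sum_comm]
    exact Finset.sum_congr rfl fun i _ => Finset.sum_congr rfl fun j _ => by
      rw [hHsymm j i]
  have hsum : (∑ i, ∑ j, pd i (pd j (fun w => Real.exp (-2 * fξ w) * H i j w)) z)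
      = Real.exp (-2 * fξ z) * (∑ i, ∑ j, pd i (pd j (H i j)) z)
        - Real.exp (-2 * fξ z) * (4 * ∑ i, ∑ j, a i * pd j (H i j) z)
        + Real.exp (-2 * fξ z) * (4 * ∑ i, ∑ j, a i * a j * H i j z) := by
    have : (∑ i, ∑ j, pd i (pd j (fun w => Real.exp (-2 * fξ w) * H i j w)) z)
        = ∑ i, ∑ j, (Real.exp (-2 * fξ z) * pd i (pd j (H i j)) z
          - Real.exp (-2 * fξ z) * (2 * (a j * pd i (H i j) z))
          - Real.exp (-2 * fξ z) * (2 * (a i * pd j (H i j) z))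
          + Real.exp (-2 * fξ z) * (4 * (a i * a j * H i j z))) :=
      Finset.sum_congr rfl fun i _ => Finset.sum_congr rfl fun j _ => hterm i j
    have hT' : (∑ i, ∑ j, a j * pd i (H i j) z) = ∑ i, a i * ∑ j, pd j (H i j) z := by
      rw [hT]; exact Finset.sum_congr rfl fun i _ => (Finset.mul_sum _ _ _).symm
    rw [this]
    simp only [Finset.sum_add_distrib, Finset.sum_sub_distrib, ← Finset.mul_sum]
    rw [hT']
    ring
  rw [hscξ, hsc, hΔf, hnrm, hsum]
  ring
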